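/- arXiv:1505.02502 — 3 statements merged into one kernel-verified Lean document; each statement's English description precedes it below -/
import Mathlib

section
/- Let p₀<0 and let γ:(p₀,0)→ℝ be infinitely differentiable. Let h and h̃ be infinitely differentiable real-valued functions on ℝ×(p₀,0), both even in the first variable (h(−q,p)=h(q,p) and h̃(−q,p)=h̃(q,p) for all q,p), both satisfying the height equation (1+(∂_qh)²)∂_p²h − 2·∂_ph·∂_qh·∂_p∂_qh + (∂_ph)²·∂_q²h − γ(p)·(∂_ph)³ = 0 on ℝ×(p₀,0), with ∂_ph(0,p)>0 and ∂_ph̃(0,p)>0 for all p∈(p₀,0). If h(0,p)=h̃(0,p) for all p∈(p₀,0), then for every n∈ℕ and every p∈(p₀,0): ∂_q^n h(0,p)=∂_q^n h̃(0,p). -/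
/-- Partial derivative in the first (hodograph `q`) variable. -/
noncomputable def pdq (f : ℝ × ℝ → ℝ) (z : ℝ × ℝ) : ℝ := fderiv ℝ f z (1, 0)

/-- Partial derivative in the second (hodograph `p`) variable. -/
noncomputable def pdp (f : ℝ × ℝ → ℝ) (z : ℝ × ℝ) : ℝ := fderiv ℝ f z (0, 1)

section Aux

open scoped ContDiff
open Set Filter

variable {I : Set ℝ} {f g f' g' : ℝ × ℝ → ℝ}

/-- Smoothness on the strip `ℝ × I`. -/
def Sm (I : Set ℝ) (f : ℝ × ℝ → ℝ) : Prop := ContDiffOn ℝ ∞ f ((univ : Set ℝ) ×ˢ I)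

lemma isOpenS (hI : IsOpen I) : IsOpen ((univ : Set ℝ) ×ˢ I) := isOpen_univ.prod hI

lemma memS {p : ℝ} (hp : p ∈ I) : (((0:ℝ), p) : ℝ × ℝ) ∈ (univ : Set ℝ) ×ˢ I := ⟨trivial, hp⟩

lemma Sm.diffAt (hI : IsOpen I) (hf : Sm I f) {z : ℝ × ℝ} (hz : z ∈ (univ : Set ℝ) ×ˢ I) :
    DifferentiableAt ℝ f z :=
  (hf.contDiffAt ((isOpenS hI).mem_nhds hz)).differentiableAt (by simp)

lemma Sm.fderivSm (hI : IsOpen I) (hf : Sm I f) :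
    ContDiffOn ℝ ∞ (fderiv ℝ f) ((univ : Set ℝ) ×ˢ I) :=
  hf.fderiv_of_isOpen (isOpenS hI) (le_of_eq (show (∞ : WithTop ℕ∞) = ∞ + 1 from rfl))

lemma Sm.pdqSm (hI : IsOpen I) (hf : Sm I f) : Sm I (pdq f) :=
  (Sm.fderivSm hI hf).clm_apply contDiffOn_const

lemma Sm.pdpSm (hI : IsOpen I) (hf : Sm I f) : Sm I (pdp f) :=
  (Sm.fderivSm hI hf).clm_apply contDiffOn_const

lemma Sm.iterSm (hI : IsOpen I) (hf : Sm I f) : ∀ n, Sm I (pdq^[n] f) := by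
  intro n
  induction n generalizing f with
  | zero => exact hf
  | succ n IH => rw [Function.iterate_succ_apply]; exact IH (hf.pdqSm hI)

lemma Sm.mulF (hf : Sm I f) (hg : Sm I g) : Sm I (fun z => f z * g z) := hf.mul hg
lemma Sm.addF (hf : Sm I f) (hg : Sm I g) : Sm I (fun z => f z + g z) := hf.add hg

lemma pdq_congr (hI : IsOpen I) (hfg : EqOn f g ((univ : Set ℝ) ×ˢ I)) {z : ℝ × ℝ}
    (hz : z ∈ (univ : Set ℝ) ×ˢ I) : pdq f z = pdq g z := by
  unfold pdq
  rw [Filter.EventuallyEq.fderiv_eq (hfg.eventuallyEq_of_mem ((isOpenS hI).mem_nhds hz))]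

lemma iter_congr (hI : IsOpen I) :
    ∀ n (f g : ℝ × ℝ → ℝ), EqOn f g ((univ : Set ℝ) ×ˢ I) →
      EqOn (pdq^[n] f) (pdq^[n] g) ((univ : Set ℝ) ×ˢ I) := by
  intro n
  induction n with
  | zero => intro f g h; exact h
  | succ n IH =>
    intro f g h z hz
    rw [Function.iterate_succ_apply, Function.iterate_succ_apply]
    exact IH (pdq f) (pdq g) (fun w hw => pdq_congr hI h hw) hz

lemma pdq_addPt (hI : IsOpen I) (hf : Sm I f) (hg : Sm I g) {z : ℝ × ℝ}
    (hz : z ∈ (univ : Set ℝ) ×ˢ I) :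
    pdq (fun w => f w + g w) z = pdq f z + pdq g z := by
  unfold pdq
  rw [fderiv_fun_add (hf.diffAt hI hz) (hg.diffAt hI hz)]
  simp

lemma pdq_mulPt (hI : IsOpen I) (hf : Sm I f) (hg : Sm I g) {z : ℝ × ℝ}
    (hz : z ∈ (univ : Set ℝ) ×ˢ I) :
    pdq (fun w => f w * g w) z = pdq f z * g z + f z * pdq g z := by
  unfold pdq
  rw [fderiv_fun_mul (hf.diffAt hI hz) (hg.diffAt hI hz)]
  simp
  ring

lemma iter_add (hI : IsOpen I) :
    ∀ n (f g : ℝ × ℝ → ℝ), Sm I f → Sm I g → ∀ z ∈ (univ : Set ℝ) ×ˢ I,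
      pdq^[n] (fun w => f w + g w) z = pdq^[n] f z + pdq^[n] g z := by
  intro n
  induction n with
  | zero => intro f g _ _ z _; rfl
  | succ n IH =>
    intro f g hf hg z hz
    rw [Function.iterate_succ_apply, Function.iterate_succ_apply, Function.iterate_succ_apply]
    rw [iter_congr hI n _ (fun w => pdq f w + pdq g w)
      (fun w hw => pdq_addPt hI hf hg hw) hz]
    exact IH (pdq f) (pdq g) (hf.pdqSm hI) (hg.pdqSm hI) z hz

lemma pdq_pdp_comm (hI : IsOpen I) (hf : Sm I f) {z : ℝ × ℝ} (hz : z ∈ (univ : Set ℝ) ×ˢ I) :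
    pdq (pdp f) z = pdp (pdq f) z := by
  have hd2 : DifferentiableAt ℝ (fderiv ℝ f) z :=
    ((Sm.fderivSm hI hf).contDiffAt ((isOpenS hI).mem_nhds hz)).differentiableAt
      (by simp)
  have hsymm : ∀ v w : ℝ × ℝ, fderiv ℝ (fderiv ℝ f) z v w = fderiv ℝ (fderiv ℝ f) z w v := by
    intro v w
    apply second_derivative_symmetric_of_eventually (f := f) (f' := fderiv ℝ f)
    · filter_upwards [(isOpenS hI).mem_nhds hz] with y hy using (hf.diffAt hI hy).hasFDerivAt
    · exact hd2.hasFDerivAt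
  have e1 : fderiv ℝ (pdp f) z = (ContinuousLinearMap.apply ℝ ℝ ((0:ℝ),(1:ℝ))).comp
      (fderiv ℝ (fderiv ℝ f) z) :=
    ((ContinuousLinearMap.apply ℝ ℝ ((0:ℝ),(1:ℝ))).hasFDerivAt.comp z hd2.hasFDerivAt).fderiv
  have e2 : fderiv ℝ (pdq f) z = (ContinuousLinearMap.apply ℝ ℝ ((1:ℝ),(0:ℝ))).comp
      (fderiv ℝ (fderiv ℝ f) z) :=
    ((ContinuousLinearMap.apply ℝ ℝ ((1:ℝ),(0:ℝ))).hasFDerivAt.comp z hd2.hasFDerivAt).fderiv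
  show fderiv ℝ (pdp f) z (1,0) = fderiv ℝ (pdq f) z (0,1)
  rw [e1, e2]
  exact hsymm (1,0) (0,1)

lemma deriv_horiz (hI : IsOpen I) (hf : Sm I f) {p : ℝ} (hp : p ∈ I) (q : ℝ) :
    deriv (fun t => f (t, p)) q = pdq f (q, p) := by
  have hline : HasDerivAt (fun t : ℝ => ((t, p) : ℝ × ℝ)) ((1:ℝ), (0:ℝ)) q :=
    HasDerivAt.prodMk (hasDerivAt_id q) (hasDerivAt_const q p)
  have hz : ((q, p) : ℝ × ℝ) ∈ (univ : Set ℝ) ×ˢ I := ⟨trivial, hp⟩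
  exact ((hf.diffAt hI hz).hasFDerivAt.comp_hasDerivAt q hline).deriv

lemma deriv_vert (hI : IsOpen I) (hf : Sm I f) {p : ℝ} (hp : p ∈ I) :
    deriv (fun t => f (0, t)) p = pdp f (0, p) := by
  have hline : HasDerivAt (fun t : ℝ => (((0:ℝ), t) : ℝ × ℝ)) ((0:ℝ), (1:ℝ)) p :=
    HasDerivAt.prodMk (hasDerivAt_const p (0:ℝ)) (hasDerivAt_id p)
  have hz : (((0:ℝ), p) : ℝ × ℝ) ∈ (univ : Set ℝ) ×ˢ I := ⟨trivial, hp⟩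
  exact ((hf.diffAt hI hz).hasFDerivAt.comp_hasDerivAt p hline).deriv

/-- Axis-equality of all `q`-derivative traces up to order `N`. -/
def AE (I : Set ℝ) (N : ℕ) (f f' : ℝ × ℝ → ℝ) : Prop :=
  ∀ j ≤ N, ∀ p ∈ I, pdq^[j] f (0, p) = pdq^[j] f' (0, p)

lemma ae_refl (I : Set ℝ) (N : ℕ) (f : ℝ × ℝ → ℝ) : AE I N f f := fun _ _ _ _ => rfl

lemma ae_mono {N M : ℕ} (hMN : M ≤ N) (h : AE I N f f') : AE I M f f' :=
  fun j hj => h j (hj.trans hMN)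

lemma ae_pdq {N : ℕ} (h : AE I (N + 1) f f') : AE I N (pdq f) (pdq f') := by
  intro j hj p hp
  rw [← Function.iterate_succ_apply pdq j f, ← Function.iterate_succ_apply pdq j f']
  exact h (j + 1) (Nat.succ_le_succ hj) p hp

lemma ae_add (hI : IsOpen I) {N : ℕ} (hf : Sm I f) (hf' : Sm I f') (hg : Sm I g) (hg' : Sm I g')
    (h1 : AE I N f f') (h2 : AE I N g g') :
    AE I N (fun z => f z + g z) (fun z => f' z + g' z) := by
  intro j hj p hp
  rw [iter_add hI j f g hf hg _ (memS hp), iter_add hI j f' g' hf' hg' _ (memS hp),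
    h1 j hj p hp, h2 j hj p hp]

lemma ae_mul (hI : IsOpen I) : ∀ N (f f' g g' : ℝ × ℝ → ℝ), Sm I f → Sm I f' → Sm I g → Sm I g' →
    AE I N f f' → AE I N g g' →
    AE I N (fun z => f z * g z) (fun z => f' z * g' z) := by
  intro N
  induction N with
  | zero =>
    intro f f' g g' _ _ _ _ h1 h2 j hj p hp
    interval_cases j
    have e1 := h1 0 le_rfl p hp
    have e2 := h2 0 le_rfl p hp
    simp only [Function.iterate_zero, id] at e1 e2 ⊢
    rw [e1, e2]
  | succ N IH =>
    intro f f' g g' hf hf' hg hg' h1 h2 j hj p hp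
    match j, hj with
    | 0, _ =>
      have e1 := h1 0 (by omega) p hp
      have e2 := h2 0 (by omega) p hp
      simp only [Function.iterate_zero, id] at e1 e2 ⊢
      rw [e1, e2]
    | (k+1), hj =>
      have hk : k ≤ N := by omega
      rw [Function.iterate_succ_apply, Function.iterate_succ_apply]
      rw [iter_congr hI k _ (fun w => pdq f w * g w + f w * pdq g w)
        (fun w hw => pdq_mulPt hI hf hg hw) (memS hp)]
      rw [iter_congr hI k _ (fun w => pdq f' w * g' w + f' w * pdq g' w)
        (fun w hw => pdq_mulPt hI hf' hg' hw) (memS hp)]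
      rw [iter_add hI k _ _ ((hf.pdqSm hI).mulF hg) (hf.mulF (hg.pdqSm hI)) _ (memS hp)]
      rw [iter_add hI k _ _ ((hf'.pdqSm hI).mulF hg') (hf'.mulF (hg'.pdqSm hI)) _ (memS hp)]
      have e1 := IH (pdq f) (pdq f') g g' (hf.pdqSm hI) (hf'.pdqSm hI) hg hg'
        (ae_pdq h1) (ae_mono (Nat.le_succ N) h2) k hk p hp
      have e2 := IH f f' (pdq g) (pdq g') hf hf' (hg.pdqSm hI) (hg'.pdqSm hI)
        (ae_mono (Nat.le_succ N) h1) (ae_pdq h2) k hk p hp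
      rw [e1, e2]

lemma comm_iter (hI : IsOpen I) : ∀ n (f : ℝ × ℝ → ℝ), Sm I f →
    EqOn (pdq^[n] (pdp f)) (pdp (pdq^[n] f)) ((univ : Set ℝ) ×ˢ I) := by
  intro n
  induction n with
  | zero => intro f _ z _; rfl
  | succ n IH =>
    intro f hf z hz
    rw [Function.iterate_succ_apply]
    rw [iter_congr hI n (pdq (pdp f)) (pdp (pdq f))
      (fun w hw => pdq_pdp_comm hI hf hw) hz]
    rw [IH (pdq f) (hf.pdqSm hI) hz, Function.iterate_succ_apply]

lemma ae_pdp (hI : IsOpen I) {N : ℕ} (hf : Sm I f) (hf' : Sm I f') (h : AE I N f f') :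
    AE I N (pdp f) (pdp f') := by
  intro j hj p hp
  rw [comm_iter hI j f hf (memS hp), comm_iter hI j f' hf' (memS hp)]
  rw [← deriv_vert hI (hf.iterSm hI j) hp, ← deriv_vert hI (hf'.iterSm hI j) hp]
  apply Filter.EventuallyEq.deriv_eq
  filter_upwards [hI.mem_nhds hp] with t ht using h j hj t ht

/-- Top-term extraction: the `N`-th `q`-derivative of a product `c * u` on the axis differs
from `c * (N-th derivative of u)` by terms determined by lower-order traces. -/
lemma TT (hI : IsOpen I) : ∀ N (c c' u u' : ℝ × ℝ → ℝ), Sm I c → Sm I c' → Sm I u → Sm I u' →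
    AE I N c c' → (∀ j < N, ∀ p ∈ I, pdq^[j] u (0, p) = pdq^[j] u' (0, p)) →
    ∀ p ∈ I,
      pdq^[N] (fun z => c z * u z) (0, p) - c (0, p) * pdq^[N] u (0, p) =
      pdq^[N] (fun z => c' z * u' z) (0, p) - c' (0, p) * pdq^[N] u' (0, p) := by
  intro N
  induction N with
  | zero =>
    intro c c' u u' _ _ _ _ _ _ p hp
    show c (0,p) * u (0,p) - c (0,p) * u (0,p) = c' (0,p) * u' (0,p) - c' (0,p) * u' (0,p)
    ring
  | succ N IH =>
    intro c c' u u' hc hc' hu hu' hAc hAu p hp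
    have hc0 : c (0, p) = c' (0, p) := hAc 0 (by omega) p hp
    rw [Function.iterate_succ_apply (f := pdq) (n := N) (x := fun z => c z * u z),
        Function.iterate_succ_apply (f := pdq) (n := N) (x := fun z => c' z * u' z)]
    rw [iter_congr hI N _ (fun w => pdq c w * u w + c w * pdq u w)
      (fun w hw => pdq_mulPt hI hc hu hw) (memS hp)]
    rw [iter_congr hI N _ (fun w => pdq c' w * u' w + c' w * pdq u' w)
      (fun w hw => pdq_mulPt hI hc' hu' hw) (memS hp)]
    rw [iter_add hI N _ _ ((hc.pdqSm hI).mulF hu) (hc.mulF (hu.pdqSm hI)) _ (memS hp)]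
    rw [iter_add hI N _ _ ((hc'.pdqSm hI).mulF hu') (hc'.mulF (hu'.pdqSm hI)) _ (memS hp)]
    have e1 : pdq^[N] (fun w => pdq c w * u w) (0,p) = pdq^[N] (fun w => pdq c' w * u' w) (0,p) :=
      ae_mul hI N (pdq c) (pdq c') u u' (hc.pdqSm hI) (hc'.pdqSm hI) hu hu'
        (ae_pdq hAc) (fun j hj p hp => hAu j (by omega) p hp) N le_rfl p hp
    have e2 := IH c c' (pdq u) (pdq u') hc hc' (hu.pdqSm hI) (hu'.pdqSm hI)
      (ae_mono (Nat.le_succ N) hAc)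
      (fun j hj p' hp' => by
        rw [← Function.iterate_succ_apply pdq j u, ← Function.iterate_succ_apply pdq j u']
        exact hAu (j+1) (by omega) p' hp') p hp
    rw [← Function.iterate_succ_apply pdq N u, ← Function.iterate_succ_apply pdq N u'] at e2
    rw [hc0] at e2
    rw [e1, hc0]
    linarith [e2]

lemma shift2 (f : ℝ × ℝ → ℝ) (m : ℕ) : pdq^[m] (pdq (pdq f)) = pdq^[m+2] f := by
  rw [Function.iterate_succ_apply, Function.iterate_succ_apply]

lemma iter_deriv_eq (hI : IsOpen I) (hf : Sm I f) {p : ℝ} (hp : p ∈ I) :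
    ∀ n (q : ℝ), iteratedDeriv n (fun t => f (t, p)) q = pdq^[n] f (q, p) := by
  intro n
  induction n with
  | zero => intro q; simp
  | succ n IH =>
    intro q
    rw [iteratedDeriv_succ]
    have hfun : iteratedDeriv n (fun t => f (t, p)) = fun t => pdq^[n] f (t, p) :=
      funext fun t => IH t
    rw [hfun, deriv_horiz hI (hf.iterSm hI n) hp q, ← Function.iterate_succ_apply' pdq n f]

end Aux

/-- All `q`-derivatives of an even solution of the height equation along the axis of
symmetry `q = 0` are uniquely determined by the on-axis trace `p ↦ h(0,p)` and the
vorticity function `γ`. -/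
theorem on_axis_derivatives_determined
    (p₀ : ℝ) (hp₀ : p₀ < 0)
    (γ : ℝ → ℝ) (hγ : ContDiffOn ℝ (⊤ : ℕ∞) γ (Set.Ioo p₀ 0))
    (h h' : ℝ × ℝ → ℝ)
    (hh : ContDiffOn ℝ (⊤ : ℕ∞) h (Set.univ ×ˢ Set.Ioo p₀ 0))
    (hh' : ContDiffOn ℝ (⊤ : ℕ∞) h' (Set.univ ×ˢ Set.Ioo p₀ 0))
    (heven : ∀ q : ℝ, ∀ p ∈ Set.Ioo p₀ 0, h (-q, p) = h (q, p))
    (heven' : ∀ q : ℝ, ∀ p ∈ Set.Ioo p₀ 0, h' (-q, p) = h' (q, p))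
    (heq : ∀ z ∈ (Set.univ ×ˢ Set.Ioo p₀ 0 : Set (ℝ × ℝ)),
        (1 + (pdq h z)^2) * pdp (pdp h) z
          - 2 * pdp h z * pdq h z * pdq (pdp h) z
          + (pdp h z)^2 * pdq (pdq h) z
          - γ z.2 * (pdp h z)^3 = 0)
    (heq' : ∀ z ∈ (Set.univ ×ˢ Set.Ioo p₀ 0 : Set (ℝ × ℝ)),
        (1 + (pdq h' z)^2) * pdp (pdp h') z
          - 2 * pdp h' z * pdq h' z * pdq (pdp h') z
          + (pdp h' z)^2 * pdq (pdq h') z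
          - γ z.2 * (pdp h' z)^3 = 0)
    (hp : ∀ p ∈ Set.Ioo p₀ 0, 0 < pdp h (0, p))
    (hp' : ∀ p ∈ Set.Ioo p₀ 0, 0 < pdp h' (0, p))
    (htrace : ∀ p ∈ Set.Ioo p₀ 0, h (0, p) = h' (0, p)) :
    ∀ n : ℕ, ∀ p ∈ Set.Ioo p₀ 0,
      iteratedDeriv n (fun q => h (q, p)) 0 = iteratedDeriv n (fun q => h' (q, p)) 0 := by
  have hI : IsOpen (Set.Ioo p₀ 0) := isOpen_Ioo
  have smh : Sm (Set.Ioo p₀ 0) h := hh.of_le (by simp)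
  have smh' : Sm (Set.Ioo p₀ 0) h' := hh'.of_le (by simp)
  have smγ : Sm (Set.Ioo p₀ 0) (fun z : ℝ × ℝ => γ z.2) := by
    exact (hγ.of_le (by simp)).comp contDiff_snd.contDiffOn (fun z hz => hz.2)
  -- smoothness kit
  have s1 : Sm (Set.Ioo p₀ 0) (pdq h) := smh.pdqSm hI
  have s2 : Sm (Set.Ioo p₀ 0) (pdp h) := smh.pdpSm hI
  have s3 : Sm (Set.Ioo p₀ 0) (pdq (pdp h)) := s2.pdqSm hI
  have s4 : Sm (Set.Ioo p₀ 0) (pdp (pdp h)) := s2.pdpSm hI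
  have s5 : Sm (Set.Ioo p₀ 0) (pdq (pdq h)) := s1.pdqSm hI
  have s1' : Sm (Set.Ioo p₀ 0) (pdq h') := smh'.pdqSm hI
  have s2' : Sm (Set.Ioo p₀ 0) (pdp h') := smh'.pdpSm hI
  have s3' : Sm (Set.Ioo p₀ 0) (pdq (pdp h')) := s2'.pdqSm hI
  have s4' : Sm (Set.Ioo p₀ 0) (pdp (pdp h')) := s2'.pdpSm hI
  have s5' : Sm (Set.Ioo p₀ 0) (pdq (pdq h')) := s1'.pdqSm hI
  have smcst : ∀ c : ℝ, Sm (Set.Ioo p₀ 0) (fun _ => c) := fun c => contDiffOn_const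
  -- the key claim
  have key : ∀ n, ∀ p ∈ Set.Ioo p₀ 0, pdq^[n] h (0, p) = pdq^[n] h' (0, p) := by
    intro n
    induction n using Nat.strong_induction_on with
    | _ n IH =>
    match n, IH with
    | 0, _ => intro p hpm; simpa using htrace p hpm
    | 1, _ =>
      intro p hpm
      have hzero : ∀ f : ℝ × ℝ → ℝ, Sm (Set.Ioo p₀ 0) f → (∀ q : ℝ, f (-q, p) = f (q, p)) →
          pdq f (0, p) = 0 := by
        intro f hf hev
        have hd : deriv (fun t => f (t, p)) 0 = pdq f (0, p) := deriv_horiz hI hf hpm 0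
        have hneg := deriv_comp_neg (f := fun t => f (t, p)) (x := (0:ℝ))
        have hfun : (fun x : ℝ => f (-x, p)) = fun t => f (t, p) := funext fun q => hev q
        rw [hfun, neg_zero] at hneg
        linarith [hd, hneg]
      have e1 : pdq^[1] h (0, p) = pdq h (0, p) := by
        rw [Function.iterate_one]
      have e2 : pdq^[1] h' (0, p) = pdq h' (0, p) := by
        rw [Function.iterate_one]
      rw [e1, e2, hzero h smh (fun q => heven q p hpm), hzero h' smh' (fun q => heven' q p hpm)]
    | (k+2), IH =>
      intro p hpm
      have hAE : AE (Set.Ioo p₀ 0) (k+1) h h' := fun j hj p' hp' => IH j (by omega) p' hp'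
      have a1 : AE (Set.Ioo p₀ 0) (k+1) (pdp h) (pdp h') := ae_pdp hI smh smh' hAE
      have a1k : AE (Set.Ioo p₀ 0) k (pdp h) (pdp h') := ae_mono (by omega) a1
      have a2 : AE (Set.Ioo p₀ 0) k (pdq h) (pdq h') := ae_pdq hAE
      have a3 : AE (Set.Ioo p₀ 0) k (pdq (pdp h)) (pdq (pdp h')) := ae_pdq a1
      have a4 : AE (Set.Ioo p₀ 0) k (pdp (pdp h)) (pdp (pdp h')) :=
        ae_mono (by omega) (ae_pdp hI s2 s2' a1)
      -- the right-hand side of the solved-for-pdq² equation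
      have hRae : AE (Set.Ioo p₀ 0) k
          (fun z => γ z.2 * (pdp h z * (pdp h z * pdp h z)) +
            ((2:ℝ) * (pdp h z * (pdq h z * pdq (pdp h) z)) +
             ((-1:ℝ) + (-1:ℝ) * (pdq h z * pdq h z)) * pdp (pdp h) z))
          (fun z => γ z.2 * (pdp h' z * (pdp h' z * pdp h' z)) +
            ((2:ℝ) * (pdp h' z * (pdq h' z * pdq (pdp h') z)) +
             ((-1:ℝ) + (-1:ℝ) * (pdq h' z * pdq h' z)) * pdp (pdp h') z)) := by
        apply ae_add hI
          (smγ.mulF (s2.mulF (s2.mulF s2))) (smγ.mulF (s2'.mulF (s2'.mulF s2')))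
          ((smcst 2).mulF (s2.mulF (s1.mulF s3))
            |>.addF (((smcst (-1)).addF ((smcst (-1)).mulF (s1.mulF s1))).mulF s4))
          ((smcst 2).mulF (s2'.mulF (s1'.mulF s3'))
            |>.addF (((smcst (-1)).addF ((smcst (-1)).mulF (s1'.mulF s1'))).mulF s4'))
        · exact ae_mul hI k _ _ _ _ smγ smγ (s2.mulF (s2.mulF s2)) (s2'.mulF (s2'.mulF s2'))
            (ae_refl _ _ _)
            (ae_mul hI k _ _ _ _ s2 s2' (s2.mulF s2) (s2'.mulF s2') a1k
              (ae_mul hI k _ _ _ _ s2 s2' s2 s2' a1k a1k))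
        · apply ae_add hI ((smcst 2).mulF (s2.mulF (s1.mulF s3)))
            ((smcst 2).mulF (s2'.mulF (s1'.mulF s3')))
            (((smcst (-1)).addF ((smcst (-1)).mulF (s1.mulF s1))).mulF s4)
            (((smcst (-1)).addF ((smcst (-1)).mulF (s1'.mulF s1'))).mulF s4')
          · exact ae_mul hI k _ _ _ _ (smcst 2) (smcst 2)
              (s2.mulF (s1.mulF s3)) (s2'.mulF (s1'.mulF s3')) (ae_refl _ _ _)
              (ae_mul hI k _ _ _ _ s2 s2' (s1.mulF s3) (s1'.mulF s3') a1k
                (ae_mul hI k _ _ _ _ s1 s1' s3 s3' a2 a3))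
          · exact ae_mul hI k _ _ _ _
              ((smcst (-1)).addF ((smcst (-1)).mulF (s1.mulF s1)))
              ((smcst (-1)).addF ((smcst (-1)).mulF (s1'.mulF s1'))) s4 s4'
              (ae_add hI (smcst (-1)) (smcst (-1)) ((smcst (-1)).mulF (s1.mulF s1))
                ((smcst (-1)).mulF (s1'.mulF s1')) (ae_refl _ _ _)
                (ae_mul hI k _ _ _ _ (smcst (-1)) (smcst (-1)) (s1.mulF s1) (s1'.mulF s1')
                  (ae_refl _ _ _) (ae_mul hI k _ _ _ _ s1 s1' s1 s1' a2 a2))) a4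
      -- the PDE, solved for (pdp h)² · pdq² h
      have hequ : Set.EqOn (fun z => (pdp h z * pdp h z) * pdq (pdq h) z)
          (fun z => γ z.2 * (pdp h z * (pdp h z * pdp h z)) +
            ((2:ℝ) * (pdp h z * (pdq h z * pdq (pdp h) z)) +
             ((-1:ℝ) + (-1:ℝ) * (pdq h z * pdq h z)) * pdp (pdp h) z))
          (Set.univ ×ˢ Set.Ioo p₀ 0) := by
        intro z hz
        have := heq z hz
        simp only
        nlinarith [this]
      have hequ' : Set.EqOn (fun z => (pdp h' z * pdp h' z) * pdq (pdq h') z)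
          (fun z => γ z.2 * (pdp h' z * (pdp h' z * pdp h' z)) +
            ((2:ℝ) * (pdp h' z * (pdq h' z * pdq (pdp h') z)) +
             ((-1:ℝ) + (-1:ℝ) * (pdq h' z * pdq h' z)) * pdp (pdp h') z))
          (Set.univ ×ˢ Set.Ioo p₀ 0) := by
        intro z hz
        have := heq' z hz
        simp only
        nlinarith [this]
      -- equal traces of the products
      have hprod : pdq^[k] (fun z => (pdp h z * pdp h z) * pdq (pdq h) z) (0, p) =
          pdq^[k] (fun z => (pdp h' z * pdp h' z) * pdq (pdq h') z) (0, p) := by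
        rw [iter_congr hI k _ _ hequ (memS hpm), iter_congr hI k _ _ hequ' (memS hpm)]
        exact hRae k le_rfl p hpm
      -- top-term extraction
      have hTT : pdq^[k] (fun z => (pdp h z * pdp h z) * pdq (pdq h) z) (0, p)
            - (pdp h (0, p) * pdp h (0, p)) * pdq^[k] (pdq (pdq h)) (0, p)
          = pdq^[k] (fun z => (pdp h' z * pdp h' z) * pdq (pdq h') z) (0, p)
            - (pdp h' (0, p) * pdp h' (0, p)) * pdq^[k] (pdq (pdq h')) (0, p) := by
        exact TT hI k _ _ _ _ (s2.mulF s2) (s2'.mulF s2') s5 s5'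
          (ae_mul hI k _ _ _ _ s2 s2' s2 s2' a1k a1k)
          (fun j hj p' hp' => by
            rw [shift2, shift2]
            exact IH (j+2) (by omega) p' hp') p hpm
      have c0eq : pdp h (0, p) = pdp h' (0, p) := by
        have := a1 0 (by omega) p hpm
        simpa using this
      have cpos : 0 < pdp h (0, p) * pdp h (0, p) := mul_pos (hp p hpm) (hp p hpm)
      rw [← shift2 h k, ← shift2 h' k]
      apply mul_left_cancel₀ (ne_of_gt cpos)
      rw [← c0eq] at hTT
      linarith [hprod, hTT]
  intro n p hpm
  rw [iter_deriv_eq hI smh hpm n 0, iter_deriv_eq hI smh' hpm n 0]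
  exact key n p hpm
end

section
/- Let p₀<0, L>0, δ>0 and let γ:(p₀,0)→ℝ be infinitely differentiable. Let h and h̃ be infinitely differentiable real-valued functions on the strip ℝ×(p₀,0) such that: (i) both satisfy the height equation (1+(∂_qh)²)∂_p²h − 2·∂_ph·∂_qh·∂_p∂_qh + (∂_ph)²·∂_q²h − γ(p)·(∂_ph)³ = 0 on ℝ×(p₀,0); (ii) both are even in the first variable: h(−q,p)=h(q,p) and h̃(−q,p)=h̃(q,p); (iii) sup_{(q,p)∈ℝ×(p₀,0)}|∂_q^m h(q,p)| ≤ L^{m−1}(m−2)! and sup_{(q,p)∈ℝ×(p₀,0)}|∂_q^m h̃(q,p)| ≤ L^{m−1}(m−2)! for every integer m≥2; (iv) ∂_ph≥δ and ∂_ph̃≥δ on ℝ×(p₀,0). If h(0,p)=h̃(0,p) for all p∈(p₀,0), then h=h̃ on all of ℝ×(p₀,0). -/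
open Set Filter Topology
open scoped ContDiff


namespace HFR

variable {f : ℝ × ℝ → ℝ} {S : Set (ℝ × ℝ)}

lemma infty_add_one : (∞ + 1 : WithTop ℕ∞) ≤ ∞ := by
  norm_num

lemma smooth_fderiv (hS : IsOpen S) (hf : ContDiffOn ℝ ∞ f S) :
    ContDiffOn ℝ ∞ (fun z => fderiv ℝ f z) S :=
  hf.fderiv_of_isOpen hS infty_add_one

lemma smooth_pdq (hS : IsOpen S) (hf : ContDiffOn ℝ ∞ f S) :
    ContDiffOn ℝ ∞ (pdq f) S :=
  (smooth_fderiv hS hf).clm_apply contDiffOn_const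

lemma smooth_pdp (hS : IsOpen S) (hf : ContDiffOn ℝ ∞ f S) :
    ContDiffOn ℝ ∞ (pdp f) S :=
  (smooth_fderiv hS hf).clm_apply contDiffOn_const

lemma smooth_pdq_iter (hS : IsOpen S) (hf : ContDiffOn ℝ ∞ f S) (m : ℕ) :
    ContDiffOn ℝ ∞ (pdq^[m] f) S := by
  induction m generalizing f with
  | zero => exact hf
  | succ m ih =>
      rw [Function.iterate_succ_apply]
      exact ih (smooth_pdq hS hf)

lemma hasDerivAt_line_q (hS : IsOpen S) (hf : ContDiffOn ℝ ∞ f S) {q p : ℝ}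
    (hz : (q, p) ∈ S) : HasDerivAt (fun q' => f (q', p)) (pdq f (q, p)) q := by
  have hd : DifferentiableAt ℝ f (q, p) :=
    (hf.contDiffAt (hS.mem_nhds hz)).differentiableAt (by norm_num)
  have hline : HasDerivAt (fun q' : ℝ => ((q' : ℝ), p)) (1, 0) q :=
    (hasDerivAt_id q).prodMk (hasDerivAt_const q p)
  exact hd.hasFDerivAt.comp_hasDerivAt q hline

lemma hasDerivAt_line_p (hS : IsOpen S) (hf : ContDiffOn ℝ ∞ f S) {q p : ℝ}
    (hz : (q, p) ∈ S) : HasDerivAt (fun p' => f (q, p')) (pdp f (q, p)) p := by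
  have hd : DifferentiableAt ℝ f (q, p) :=
    (hf.contDiffAt (hS.mem_nhds hz)).differentiableAt (by norm_num)
  have hline : HasDerivAt (fun p' : ℝ => ((q : ℝ), p')) (0, 1) p :=
    (hasDerivAt_const p q).prodMk (hasDerivAt_id p)
  exact hd.hasFDerivAt.comp_hasDerivAt p hline

lemma deriv_line_q (hS : IsOpen S) (hf : ContDiffOn ℝ ∞ f S) {q p : ℝ}
    (hz : (q, p) ∈ S) : deriv (fun q' => f (q', p)) q = pdq f (q, p) :=
  (hasDerivAt_line_q hS hf hz).deriv

lemma deriv_line_p (hS : IsOpen S) (hf : ContDiffOn ℝ ∞ f S) {q p : ℝ}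
    (hz : (q, p) ∈ S) : deriv (fun p' => f (q, p')) p = pdp f (q, p) :=
  (hasDerivAt_line_p hS hf hz).deriv

lemma pdq_pdp_comm (hS : IsOpen S) (hf : ContDiffOn ℝ ∞ f S) {z : ℝ × ℝ}
    (hz : z ∈ S) : pdq (pdp f) z = pdp (pdq f) z := by
  have hA : ContDiffAt ℝ ∞ f z := hf.contDiffAt (hS.mem_nhds hz)
  have hsymm : IsSymmSndFDerivAt ℝ f z := hA.isSymmSndFDerivAt (by simp; exact WithTop.coe_le_coe.2 (le_top : (2:ℕ∞) ≤ ⊤))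
  have hdf : DifferentiableAt ℝ (fun w => fderiv ℝ f w) z :=
    ((smooth_fderiv hS hf).contDiffAt (hS.mem_nhds hz)).differentiableAt (by norm_num)
  have e1 : pdq (pdp f) z = fderiv ℝ (fderiv ℝ f) z (1, 0) (0, 1) := by
    show fderiv ℝ (fun w => fderiv ℝ f w (0, 1)) z (1, 0) = _
    rw [fderiv_clm_apply hdf (differentiableAt_const _)]
    simp
  have e2 : pdp (pdq f) z = fderiv ℝ (fderiv ℝ f) z (0, 1) (1, 0) := by
    show fderiv ℝ (fun w => fderiv ℝ f w (1, 0)) z (0, 1) = _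
    rw [fderiv_clm_apply hdf (differentiableAt_const _)]
    simp
  rw [e1, e2, hsymm.eq]

end HFR

namespace HFR
variable {f : ℝ × ℝ → ℝ} {S : Set (ℝ × ℝ)}

lemma pdq_pdp_comm_iter (hS : IsOpen S) (hf : ContDiffOn ℝ ∞ f S) (m : ℕ) {z : ℝ × ℝ}
    (hz : z ∈ S) : pdq^[m] (pdp f) z = pdp (pdq^[m] f) z := by
  induction m generalizing z with
  | zero => rfl
  | succ m ih =>
      rw [Function.iterate_succ_apply']
      have h1 : pdq^[m] (pdp f) =ᶠ[𝓝 z] pdp (pdq^[m] f) :=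
        Filter.eventuallyEq_of_mem (hS.mem_nhds hz) (fun w hw => ih hw)
      have h2 : pdq (pdq^[m] (pdp f)) z = pdq (pdp (pdq^[m] f)) z :=
        congrArg (fun L : (ℝ × ℝ) →L[ℝ] ℝ => L (1, 0)) h1.fderiv_eq
      rw [h2, pdq_pdp_comm hS (smooth_pdq_iter hS hf m) hz,
        Function.iterate_succ_apply' pdq m f]

lemma contDiff_line (hS : IsOpen S) (hf : ContDiffOn ℝ ∞ f S) {p : ℝ}
    (hline : ∀ q : ℝ, (q, p) ∈ S) : ContDiff ℝ ∞ (fun q => f (q, p)) := by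
  rw [contDiff_iff_contDiffAt]
  intro q
  exact (hf.contDiffAt (hS.mem_nhds (hline q))).comp q
    ((contDiff_id.prodMk contDiff_const).contDiffAt)

lemma iteratedDeriv_line (hS : IsOpen S) (hf : ContDiffOn ℝ ∞ f S) {p : ℝ}
    (hline : ∀ q : ℝ, (q, p) ∈ S) (m : ℕ) (q : ℝ) :
    iteratedDeriv m (fun q' => f (q', p)) q = pdq^[m] f (q, p) := by
  induction m generalizing f with
  | zero => simp
  | succ m ih =>
      rw [iteratedDeriv_succ']
      have hder : deriv (fun q' => f (q', p)) = fun q' => pdq f (q', p) :=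
        funext fun q' => deriv_line_q hS hf (hline q')
      rw [hder, ih (smooth_pdq hS hf), Function.iterate_succ_apply]

end HFR

namespace HFR

lemma contDiff_deriv {f : ℝ → ℝ} (hf : ContDiff ℝ ∞ f) : ContDiff ℝ ∞ (deriv f) :=
  (contDiff_infty_iff_deriv.1 hf).2

lemma iteratedDeriv_zero_fun (n : ℕ) (x : ℝ) :
    iteratedDeriv n (fun _ : ℝ => (0 : ℝ)) x = 0 := by
  induction n generalizing x with
  | zero => simp
  | succ n ih =>
      rw [iteratedDeriv_succ']
      simpa [deriv_const] using ih x

lemma iteratedDeriv_add' {f g : ℝ → ℝ} (hf : ContDiff ℝ ∞ f) (hg : ContDiff ℝ ∞ g)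
    (n : ℕ) (x : ℝ) :
    iteratedDeriv n (fun y => f y + g y) x = iteratedDeriv n f x + iteratedDeriv n g x := by
  induction n generalizing f g x with
  | zero => simp
  | succ n ih =>
      rw [iteratedDeriv_succ', iteratedDeriv_succ', iteratedDeriv_succ']
      have hder : deriv (fun y => f y + g y) = fun y => deriv f y + deriv g y := by
        funext y
        exact deriv_add (hf.differentiable (by simp) y) (hg.differentiable (by simp) y)
      rw [hder]
      exact ih (contDiff_deriv hf) (contDiff_deriv hg) x

lemma iteratedDeriv_sub' {f g : ℝ → ℝ} (hf : ContDiff ℝ ∞ f) (hg : ContDiff ℝ ∞ g)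
    (n : ℕ) (x : ℝ) :
    iteratedDeriv n (fun y => f y - g y) x = iteratedDeriv n f x - iteratedDeriv n g x := by
  induction n generalizing f g x with
  | zero => simp
  | succ n ih =>
      rw [iteratedDeriv_succ', iteratedDeriv_succ', iteratedDeriv_succ']
      have hder : deriv (fun y => f y - g y) = fun y => deriv f y - deriv g y := by
        funext y
        exact deriv_sub (hf.differentiable (by simp) y) (hg.differentiable (by simp) y)
      rw [hder]
      exact ih (contDiff_deriv hf) (contDiff_deriv hg) x

/-- `Match n f g` : the iterated derivatives of `f` and `g` at `0` agree up to order `n`. -/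
def Match (n : ℕ) (f g : ℝ → ℝ) : Prop :=
  ∀ i ≤ n, iteratedDeriv i f 0 = iteratedDeriv i g 0

lemma Match.mono {n m : ℕ} {f g : ℝ → ℝ} (h : Match n f g) (hmn : m ≤ n) : Match m f g :=
  fun i hi => h i (hi.trans hmn)

lemma Match.refl {n : ℕ} {f : ℝ → ℝ} : Match n f f := fun _ _ => _root_.rfl

lemma Match.deriv {n : ℕ} {f g : ℝ → ℝ} (h : Match (n + 1) f g) :
    Match n (deriv f) (deriv g) := by
  intro i hi
  rw [← iteratedDeriv_succ', ← iteratedDeriv_succ']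
  exact h (i + 1) (by omega)

lemma Match.add {n : ℕ} {f g f' g' : ℝ → ℝ} (hf : ContDiff ℝ ∞ f) (hg : ContDiff ℝ ∞ g)
    (hf' : ContDiff ℝ ∞ f') (hg' : ContDiff ℝ ∞ g')
    (h1 : Match n f f') (h2 : Match n g g') :
    Match n (fun x => f x + g x) (fun x => f' x + g' x) := by
  intro i hi
  rw [iteratedDeriv_add' hf hg, iteratedDeriv_add' hf' hg', h1 i hi, h2 i hi]

lemma Match.mul {n : ℕ} {f g f' g' : ℝ → ℝ} (hf : ContDiff ℝ ∞ f) (hg : ContDiff ℝ ∞ g)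
    (hf' : ContDiff ℝ ∞ f') (hg' : ContDiff ℝ ∞ g')
    (h1 : Match n f f') (h2 : Match n g g') :
    Match n (fun x => f x * g x) (fun x => f' x * g' x) := by
  induction n generalizing f g f' g' with
  | zero =>
      intro i hi
      interval_cases i
      have e1 := h1 0 le_rfl; have e2 := h2 0 le_rfl
      simp only [iteratedDeriv_zero] at e1 e2 ⊢
      rw [e1, e2]
  | succ n ih =>
      intro i hi
      rcases Nat.eq_zero_or_pos i with rfl | hipos
      · simp only [iteratedDeriv_zero]
        have e1 := h1 0 (by omega); have e2 := h2 0 (by omega)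
        simp only [iteratedDeriv_zero] at e1 e2
        rw [e1, e2]
      obtain ⟨j, rfl⟩ : ∃ j, i = j + 1 := ⟨i - 1, by omega⟩
      rw [iteratedDeriv_succ', iteratedDeriv_succ']
      have hd1 : _root_.deriv (fun x => f x * g x) = fun x => _root_.deriv f x * g x + f x * _root_.deriv g x := by
        funext x
        exact deriv_mul (hf.differentiable (by simp) x) (hg.differentiable (by simp) x)
      have hd2 : _root_.deriv (fun x => f' x * g' x) =
          fun x => _root_.deriv f' x * g' x + f' x * _root_.deriv g' x := by
        funext x
        exact deriv_mul (hf'.differentiable (by simp) x) (hg'.differentiable (by simp) x)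
      rw [hd1, hd2]
      have m1 : Match n (fun x => _root_.deriv f x * g x) (fun x => _root_.deriv f' x * g' x) :=
        ih (contDiff_deriv hf) hg (contDiff_deriv hf') hg' h1.deriv (h2.mono (by omega))
      have m2 : Match n (fun x => f x * _root_.deriv g x) (fun x => f' x * _root_.deriv g' x) :=
        ih hf (contDiff_deriv hg) hf' (contDiff_deriv hg') (h1.mono (by omega)) h2.deriv
      exact (Match.add ((contDiff_deriv hf).mul hg) (hf.mul (contDiff_deriv hg))
        ((contDiff_deriv hf').mul hg') (hf'.mul (contDiff_deriv hg')) m1 m2) j (by omega)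

end HFR

namespace HFR

lemma Match.zero_of {n : ℕ} {w : ℝ → ℝ} (hw : ∀ i ≤ n, iteratedDeriv i w 0 = 0) :
    Match n w (fun _ => 0) := fun i hi => by rw [hw i hi, iteratedDeriv_zero_fun]

lemma iteratedDeriv_mul_zero {n : ℕ} {u w : ℝ → ℝ} (hu : ContDiff ℝ ∞ u)
    (hw : ContDiff ℝ ∞ w) (hz : ∀ i ≤ n, iteratedDeriv i w 0 = 0) :
    iteratedDeriv n (fun x => u x * w x) 0 = 0 := by
  have := Match.mul hu hw hu contDiff_const Match.refl (Match.zero_of hz) n le_rfl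
  rw [this]
  have e : (fun x => u x * (fun _ : ℝ => (0:ℝ)) x) = fun _ : ℝ => (0:ℝ) := by
    funext x; simp
  rw [e, iteratedDeriv_zero_fun]

lemma extract : ∀ (k : ℕ) (g w : ℝ → ℝ), ContDiff ℝ ∞ g → ContDiff ℝ ∞ w →
    (∀ i < k, iteratedDeriv i w 0 = 0) →
    iteratedDeriv k (fun x => g x * w x) 0 = g 0 * iteratedDeriv k w 0 := by
  intro k
  induction k with
  | zero => intro g w _ _ _; simp
  | succ k ih =>
      intro g w hg hw hzero
      rw [iteratedDeriv_succ']
      have hd : _root_.deriv (fun x => g x * w x) =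
          fun x => _root_.deriv g x * w x + g x * _root_.deriv w x := by
        funext x
        exact deriv_mul (hg.differentiable (by simp) x) (hw.differentiable (by simp) x)
      rw [hd, iteratedDeriv_add' ((contDiff_deriv hg).mul hw) (hg.mul (contDiff_deriv hw))]
      have t1 : iteratedDeriv k (fun x => _root_.deriv g x * w x) 0 = 0 :=
        iteratedDeriv_mul_zero (contDiff_deriv hg) hw (fun i hi => hzero i (by omega))
      have t2 := ih g (_root_.deriv w) hg (contDiff_deriv hw)
        (fun i hi => by rw [← iteratedDeriv_succ']; exact hzero (i+1) (by omega))
      rw [t1, t2, zero_add, ← iteratedDeriv_succ']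

lemma iteratedDeriv_odd_even_fn {f : ℝ → ℝ} (heven : ∀ x, f (-x) = f x) {n : ℕ}
    (hn : Odd n) : iteratedDeriv n f 0 = 0 := by
  have hfn : (fun x => f (-x)) = f := funext heven
  have hcn := iteratedDeriv_comp_neg n f 0
  rw [hfn, neg_zero, hn.neg_one_pow] at hcn
  have : iteratedDeriv n f 0 = -iteratedDeriv n f 0 := by
    simpa using hcn
  linarith

lemma eventually_zero_of_derivs_zero {g : ℝ → ℝ} {x₀ : ℝ} (hg : AnalyticAt ℝ g x₀)
    (hz : ∀ n, iteratedDeriv n g x₀ = 0) : ∀ᶠ x in 𝓝 x₀, g x = 0 := by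
  obtain ⟨pser, hp⟩ := hg
  obtain ⟨r, hpr⟩ := hp
  have key : ∀ y : ℝ, y ∈ EMetric.ball (0:ℝ) r → g (x₀ + y) = 0 := by
    intro y hy
    have hs := hpr.hasSum_iteratedFDeriv hy
    have hzero : ∀ n : ℕ, ((n.factorial : ℝ)⁻¹ • iteratedFDeriv ℝ n g x₀ fun _ => y) = 0 := by
      intro n
      have e1 : (iteratedFDeriv ℝ n g x₀ fun _ => y) =
          (∏ _i : Fin n, y) • iteratedFDeriv ℝ n g x₀ (fun _ => (1:ℝ)) := by
        have := (iteratedFDeriv ℝ n g x₀).map_smul_univ (fun _ : Fin n => y)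
          (fun _ => (1:ℝ))
        simpa using this
      have e2 : iteratedFDeriv ℝ n g x₀ (fun _ => (1:ℝ)) = iteratedDeriv n g x₀ :=
        (iteratedDeriv_eq_iteratedFDeriv).symm
      rw [e1, e2, hz n]
      simp
    have hs0 : HasSum (fun _ : ℕ => (0:ℝ)) (g (x₀ + y)) := by
      simp_rw [hzero] at hs
      exact hs
    have := hs0.unique hasSum_zero
    exact this
  have hball : EMetric.ball x₀ r ∈ 𝓝 x₀ := EMetric.ball_mem_nhds x₀ hpr.r_pos
  filter_upwards [hball] with x hx
  have hy : x - x₀ ∈ EMetric.ball (0:ℝ) r := by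
    have : edist (x - x₀) 0 = edist x x₀ := by
      simp [edist_dist, dist_eq_norm]
    show edist (x - x₀) 0 < r; rw [this]; exact hx
  have := key (x - x₀) hy
  simpa using this

lemma zero_of_derivs_zero_at_origin {g : ℝ → ℝ} (hg : ContDiff ℝ ∞ g)
    (ha : ∀ x : ℝ, AnalyticAt ℝ g x) (hz : ∀ n, iteratedDeriv n g 0 = 0) (x : ℝ) :
    g x = 0 := by
  set T : Set ℝ := {x | ∀ n, iteratedDeriv n g x = 0} with hT
  have hclosed : IsClosed T := by
    have : T = ⋂ n, (fun x => iteratedDeriv n g x) ⁻¹' {0} := by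
      ext y; simp [hT]
    rw [this]
    exact isClosed_iInter fun n =>
      isClosed_singleton.preimage (hg.continuous_iteratedDeriv n (by exact_mod_cast le_top))
  have hopen : IsOpen T := by
    rw [isOpen_iff_mem_nhds]
    intro x₀ hx₀
    have hev : ∀ᶠ y in 𝓝 x₀, g y = 0 := eventually_zero_of_derivs_zero (ha x₀) hx₀
    obtain ⟨U, hUsub, hUopen, hx₀U⟩ := eventually_nhds_iff.mp hev
    have hUT : U ⊆ T := by
      intro y hy n
      have hev' : g =ᶠ[𝓝 y] (fun _ => 0) :=
        Filter.eventuallyEq_of_mem (hUopen.mem_nhds hy) (fun w hw => hUsub w hw)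
      rw [hev'.iteratedDeriv_eq n, iteratedDeriv_zero_fun]
    exact Filter.mem_of_superset (hUopen.mem_nhds hx₀U) hUT
  have h0T : (0:ℝ) ∈ T := hz
  have : T = Set.univ := by
    rcases isClopen_iff.mp ⟨hclosed, hopen⟩ with he | hu
    · exact absurd (he ▸ h0T) (Set.notMem_empty 0)
    · exact hu
  have hxT : x ∈ T := this ▸ Set.mem_univ x
  simpa using hxT 0

end HFR

namespace HFR

set_option maxHeartbeats 1000000 in
lemma even_step (p₀ : ℝ) (γ : ℝ → ℝ) (h h' : ℝ × ℝ → ℝ) (δ : ℝ) (hδ : 0 < δ)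
    (hh : ContDiffOn ℝ ∞ h (Set.univ ×ˢ Set.Ioo p₀ 0))
    (hh' : ContDiffOn ℝ ∞ h' (Set.univ ×ˢ Set.Ioo p₀ 0))
    (heq : ∀ z ∈ (Set.univ ×ˢ Set.Ioo p₀ 0 : Set (ℝ × ℝ)),
        (1 + (pdq h z)^2) * pdp (pdp h) z
          - 2 * pdp h z * pdq h z * pdq (pdp h) z
          + (pdp h z)^2 * pdq (pdq h) z
          - γ z.2 * (pdp h z)^3 = 0)
    (heq' : ∀ z ∈ (Set.univ ×ˢ Set.Ioo p₀ 0 : Set (ℝ × ℝ)),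
        (1 + (pdq h' z)^2) * pdp (pdp h') z
          - 2 * pdp h' z * pdq h' z * pdq (pdp h') z
          + (pdp h' z)^2 * pdq (pdq h') z
          - γ z.2 * (pdp h' z)^3 = 0)
    (hp : ∀ z ∈ (Set.univ ×ˢ Set.Ioo p₀ 0 : Set (ℝ × ℝ)), δ ≤ pdp h z)
    (k : ℕ)
    (IH : ∀ p ∈ Set.Ioo p₀ 0, ∀ i ≤ k + 1,
        iteratedDeriv i (fun q' => h (q', p)) 0 = iteratedDeriv i (fun q' => h' (q', p)) 0)
    {p : ℝ} (hpI : p ∈ Set.Ioo p₀ 0) :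
    iteratedDeriv (k + 2) (fun q' => h (q', p)) 0
      = iteratedDeriv (k + 2) (fun q' => h' (q', p)) 0 := by
  have hSopen : IsOpen (Set.univ ×ˢ Set.Ioo p₀ 0 : Set (ℝ × ℝ)) :=
    isOpen_univ.prod isOpen_Ioo
  have hline : ∀ p' ∈ Set.Ioo p₀ 0, ∀ q : ℝ,
      (q, p') ∈ (Set.univ ×ˢ Set.Ioo p₀ 0 : Set (ℝ × ℝ)) :=
    fun p' hp' q => ⟨Set.mem_univ _, hp'⟩
  -- smoothness of pdp h, pdp (pdp h) on the strip
  have sh1 : ContDiffOn ℝ ∞ (pdp h) (Set.univ ×ˢ Set.Ioo p₀ 0) := smooth_pdp hSopen hh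
  have sh2 : ContDiffOn ℝ ∞ (pdp (pdp h)) (Set.univ ×ˢ Set.Ioo p₀ 0) := smooth_pdp hSopen sh1
  have sh1' : ContDiffOn ℝ ∞ (pdp h') (Set.univ ×ˢ Set.Ioo p₀ 0) := smooth_pdp hSopen hh'
  have sh2' : ContDiffOn ℝ ∞ (pdp (pdp h')) (Set.univ ×ˢ Set.Ioo p₀ 0) := smooth_pdp hSopen sh1'
  -- one-variable restrictions
  set F0 : ℝ → ℝ := fun q' => h (q', p) with hF0def
  set F0' : ℝ → ℝ := fun q' => h' (q', p) with hF0def'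
  set F1 : ℝ → ℝ := fun q' => pdp h (q', p) with hF1def
  set F1' : ℝ → ℝ := fun q' => pdp h' (q', p) with hF1def'
  set F2 : ℝ → ℝ := fun q' => pdp (pdp h) (q', p) with hF2def
  set F2' : ℝ → ℝ := fun q' => pdp (pdp h') (q', p) with hF2def'
  have cF0 : ContDiff ℝ ∞ F0 := contDiff_line hSopen hh (hline p hpI)
  have cF0' : ContDiff ℝ ∞ F0' := contDiff_line hSopen hh' (hline p hpI)
  have cF1 : ContDiff ℝ ∞ F1 := contDiff_line hSopen sh1 (hline p hpI)
  have cF1' : ContDiff ℝ ∞ F1' := contDiff_line hSopen sh1' (hline p hpI)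
  have cF2 : ContDiff ℝ ∞ F2 := contDiff_line hSopen sh2 (hline p hpI)
  have cF2' : ContDiff ℝ ∞ F2' := contDiff_line hSopen sh2' (hline p hpI)
  have cdF0 : ContDiff ℝ ∞ (deriv F0) := contDiff_deriv cF0
  have cdF0' : ContDiff ℝ ∞ (deriv F0') := contDiff_deriv cF0'
  have cddF0 : ContDiff ℝ ∞ (deriv (deriv F0)) := contDiff_deriv cdF0
  have cddF0' : ContDiff ℝ ∞ (deriv (deriv F0')) := contDiff_deriv cdF0'
  have cdF1 : ContDiff ℝ ∞ (deriv F1) := contDiff_deriv cF1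
  have cdF1' : ContDiff ℝ ∞ (deriv F1') := contDiff_deriv cF1'
  -- the PDE along the horizontal line through `p`
  have hEline : ∀ q : ℝ,
      (1 + (deriv F0 q)^2) * F2 q - 2 * F1 q * deriv F0 q * deriv F1 q
        + (F1 q)^2 * deriv (deriv F0) q - γ p * (F1 q)^3 = 0 := by
    intro q
    have h1 : deriv F0 q = pdq h (q, p) := deriv_line_q hSopen hh (hline p hpI q)
    have h2 : deriv F1 q = pdq (pdp h) (q, p) := deriv_line_q hSopen sh1 (hline p hpI q)
    have h3 : deriv (deriv F0) q = pdq (pdq h) (q, p) := by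
      have e : deriv F0 = fun q' => pdq h (q', p) :=
        funext fun q' => deriv_line_q hSopen hh (hline p hpI q')
      rw [e]
      exact deriv_line_q hSopen (smooth_pdq hSopen hh) (hline p hpI q)
    rw [h1, h2, h3]
    exact heq (q, p) (hline p hpI q)
  have hEline' : ∀ q : ℝ,
      (1 + (deriv F0' q)^2) * F2' q - 2 * F1' q * deriv F0' q * deriv F1' q
        + (F1' q)^2 * deriv (deriv F0') q - γ p * (F1' q)^3 = 0 := by
    intro q
    have h1 : deriv F0' q = pdq h' (q, p) := deriv_line_q hSopen hh' (hline p hpI q)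
    have h2 : deriv F1' q = pdq (pdp h') (q, p) := deriv_line_q hSopen sh1' (hline p hpI q)
    have h3 : deriv (deriv F0') q = pdq (pdq h') (q, p) := by
      have e : deriv F0' = fun q' => pdq h' (q', p) :=
        funext fun q' => deriv_line_q hSopen hh' (hline p hpI q')
      rw [e]
      exact deriv_line_q hSopen (smooth_pdq hSopen hh') (hline p hpI q)
    rw [h1, h2, h3]
    exact heq' (q, p) (hline p hpI q)
  -- matching of iterated derivatives at 0 up to order k+1
  have MF0 : Match (k + 1) F0 F0' := fun i hi => IH p hpI i hi
  have innerEq : ∀ i ≤ k + 1, ∀ p' ∈ Set.Ioo p₀ 0,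
      pdq^[i] h (0, p') = pdq^[i] h' (0, p') := by
    intro i hi p' hp'
    rw [← iteratedDeriv_line hSopen hh (hline p' hp') i 0,
      ← iteratedDeriv_line hSopen hh' (hline p' hp') i 0]
    exact IH p' hp' i hi
  have innerEv : ∀ i ≤ k + 1, ∀ p₁ ∈ Set.Ioo p₀ 0,
      (fun p' => pdq^[i] h (0, p')) =ᶠ[nhds p₁] fun p' => pdq^[i] h' (0, p') := by
    intro i hi p₁ hp₁
    exact Filter.eventuallyEq_of_mem (isOpen_Ioo.mem_nhds hp₁)
      (fun p' hp' => innerEq i hi p' hp')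
  have pdpEq : ∀ i ≤ k + 1, ∀ p' ∈ Set.Ioo p₀ 0,
      pdp (pdq^[i] h) (0, p') = pdp (pdq^[i] h') (0, p') := by
    intro i hi p' hp'
    rw [← deriv_line_p hSopen (smooth_pdq_iter hSopen hh i) (hline p' hp' 0),
      ← deriv_line_p hSopen (smooth_pdq_iter hSopen hh' i) (hline p' hp' 0)]
    exact (innerEv i hi p' hp').deriv_eq
  have MF1 : Match (k + 1) F1 F1' := by
    intro i hi
    rw [hF1def, hF1def', iteratedDeriv_line hSopen sh1 (hline p hpI) i 0,
      iteratedDeriv_line hSopen sh1' (hline p hpI) i 0,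
      pdq_pdp_comm_iter hSopen hh i (hline p hpI 0),
      pdq_pdp_comm_iter hSopen hh' i (hline p hpI 0)]
    exact pdpEq i hi p hpI
  have MF2 : Match (k + 1) F2 F2' := by
    intro i hi
    rw [hF2def, hF2def', iteratedDeriv_line hSopen sh2 (hline p hpI) i 0,
      iteratedDeriv_line hSopen sh2' (hline p hpI) i 0,
      pdq_pdp_comm_iter hSopen sh1 i (hline p hpI 0),
      pdq_pdp_comm_iter hSopen sh1' i (hline p hpI 0),
      ← deriv_line_p hSopen (smooth_pdq_iter hSopen sh1 i) (hline p hpI 0),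
      ← deriv_line_p hSopen (smooth_pdq_iter hSopen sh1' i) (hline p hpI 0)]
    have hev : (fun p' => pdq^[i] (pdp h) (0, p')) =ᶠ[nhds p]
        fun p' => pdq^[i] (pdp h') (0, p') := by
      apply Filter.eventuallyEq_of_mem (isOpen_Ioo.mem_nhds hpI)
      intro p' hp'
      show pdq^[i] (pdp h) (0, p') = pdq^[i] (pdp h') (0, p')
      rw [pdq_pdp_comm_iter hSopen hh i (hline p' hp' 0),
        pdq_pdp_comm_iter hSopen hh' i (hline p' hp' 0)]
      exact pdpEq i hi p' hp'
    exact hev.deriv_eq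
  -- the four terms, written multiplicatively
  set T1 : ℝ → ℝ := fun x => (1 + deriv F0 x * deriv F0 x) * F2 x with hT1
  set T1' : ℝ → ℝ := fun x => (1 + deriv F0' x * deriv F0' x) * F2' x with hT1'
  set T2 : ℝ → ℝ := fun x => 2 * F1 x * deriv F0 x * deriv F1 x with hT2
  set T2' : ℝ → ℝ := fun x => 2 * F1' x * deriv F0' x * deriv F1' x with hT2'
  set W : ℝ → ℝ := fun x => deriv (deriv F0) x - deriv (deriv F0') x with hW
  set T3a : ℝ → ℝ := fun x => F1 x * F1 x * W x with hT3a
  set T3b : ℝ → ℝ := fun x => F1 x * F1 x * deriv (deriv F0') x with hT3b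
  set T3' : ℝ → ℝ := fun x => F1' x * F1' x * deriv (deriv F0') x with hT3'
  set T4 : ℝ → ℝ := fun x => γ p * (F1 x * (F1 x * F1 x)) with hT4
  set T4' : ℝ → ℝ := fun x => γ p * (F1' x * (F1' x * F1' x)) with hT4'
  have cW : ContDiff ℝ ∞ W := cddF0.sub cddF0'
  have cT1 : ContDiff ℝ ∞ T1 := (contDiff_const.add (cdF0.mul cdF0)).mul cF2
  have cT1' : ContDiff ℝ ∞ T1' := (contDiff_const.add (cdF0'.mul cdF0')).mul cF2'
  have cT2 : ContDiff ℝ ∞ T2 := ((contDiff_const.mul cF1).mul cdF0).mul cdF1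
  have cT2' : ContDiff ℝ ∞ T2' := ((contDiff_const.mul cF1').mul cdF0').mul cdF1'
  have cT3a : ContDiff ℝ ∞ T3a := (cF1.mul cF1).mul cW
  have cT3b : ContDiff ℝ ∞ T3b := (cF1.mul cF1).mul cddF0'
  have cT3' : ContDiff ℝ ∞ T3' := (cF1'.mul cF1').mul cddF0'
  have cT4 : ContDiff ℝ ∞ T4 := contDiff_const.mul (cF1.mul (cF1.mul cF1))
  have cT4' : ContDiff ℝ ∞ T4' := contDiff_const.mul (cF1'.mul (cF1'.mul cF1'))
  -- the differentiated equation at order k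
  have hEzero : (fun x => T1 x - T2 x + (T3a x + T3b x) - T4 x) = fun _ : ℝ => (0:ℝ) := by
    funext x
    have := hEline x
    simp only [hT1, hT2, hT3a, hT3b, hT4, hW]
    linear_combination this
  have hEzero' : (fun x => T1' x - T2' x + T3' x - T4' x) = fun _ : ℝ => (0:ℝ) := by
    funext x
    have := hEline' x
    simp only [hT1', hT2', hT3', hT4']
    linear_combination this
  have hsplit : iteratedDeriv k T1 0 - iteratedDeriv k T2 0
      + (iteratedDeriv k T3a 0 + iteratedDeriv k T3b 0) - iteratedDeriv k T4 0 = 0 := by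
    rw [← iteratedDeriv_add' cT3a cT3b,
      ← iteratedDeriv_sub' cT1 cT2,
      ← iteratedDeriv_add' (cT1.sub cT2) (cT3a.add cT3b),
      ← iteratedDeriv_sub' ((cT1.sub cT2).add (cT3a.add cT3b)) cT4]
    rw [show (fun x => (T1 x - T2 x + (T3a x + T3b x)) - T4 x)
        = fun x => T1 x - T2 x + (T3a x + T3b x) - T4 x from rfl, hEzero]
    exact iteratedDeriv_zero_fun k 0
  have hsplit' : iteratedDeriv k T1' 0 - iteratedDeriv k T2' 0
      + iteratedDeriv k T3' 0 - iteratedDeriv k T4' 0 = 0 := by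
    rw [← iteratedDeriv_sub' cT1' cT2',
      ← iteratedDeriv_add' (cT1'.sub cT2') cT3',
      ← iteratedDeriv_sub' ((cT1'.sub cT2').add cT3') cT4']
    rw [show (fun x => (T1' x - T2' x + T3' x) - T4' x)
        = fun x => T1' x - T2' x + T3' x - T4' x from rfl, hEzero']
    exact iteratedDeriv_zero_fun k 0
  -- matching of the lower-order terms
  have kle : k ≤ k + 1 := by omega
  have mdF0 : Match k (deriv F0) (deriv F0') := MF0.deriv
  have mdF1 : Match k (deriv F1) (deriv F1') := MF1.deriv
  have mF1 : Match k F1 F1' := MF1.mono kle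
  have mF2 : Match k F2 F2' := MF2.mono kle
  have mT1 : iteratedDeriv k T1 0 = iteratedDeriv k T1' 0 :=
    (Match.mul (contDiff_const.add (cdF0.mul cdF0)) cF2
      (contDiff_const.add (cdF0'.mul cdF0')) cF2'
      (Match.add contDiff_const (cdF0.mul cdF0) contDiff_const (cdF0'.mul cdF0')
        Match.refl (Match.mul cdF0 cdF0 cdF0' cdF0' mdF0 mdF0)) mF2) k le_rfl
  have mT2 : iteratedDeriv k T2 0 = iteratedDeriv k T2' 0 :=
    (Match.mul ((contDiff_const.mul cF1).mul cdF0) cdF1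
      ((contDiff_const.mul cF1').mul cdF0') cdF1'
      (Match.mul (contDiff_const.mul cF1) cdF0 (contDiff_const.mul cF1') cdF0'
        (Match.mul contDiff_const cF1 contDiff_const cF1' Match.refl mF1) mdF0) mdF1) k le_rfl
  have mT4 : iteratedDeriv k T4 0 = iteratedDeriv k T4' 0 :=
    (Match.mul contDiff_const (cF1.mul (cF1.mul cF1)) contDiff_const (cF1'.mul (cF1'.mul cF1'))
      Match.refl (Match.mul cF1 (cF1.mul cF1) cF1' (cF1'.mul cF1')
        mF1 (Match.mul cF1 cF1 cF1' cF1' mF1 mF1))) k le_rfl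
  have mT3b : iteratedDeriv k T3b 0 = iteratedDeriv k T3' 0 :=
    (Match.mul (cF1.mul cF1) cddF0' (cF1'.mul cF1') cddF0'
      (Match.mul cF1 cF1 cF1' cF1' mF1 mF1) Match.refl) k le_rfl
  -- the top-order extraction
  have hddF0eq : ∀ i : ℕ, iteratedDeriv (i + 2) F0 = iteratedDeriv i (deriv (deriv F0)) := by
    intro i
    rw [iteratedDeriv_succ', iteratedDeriv_succ']
  have hddF0eq' : ∀ i : ℕ, iteratedDeriv (i + 2) F0' = iteratedDeriv i (deriv (deriv F0')) := by
    intro i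
    rw [iteratedDeriv_succ', iteratedDeriv_succ']
  have hWi : ∀ i : ℕ, iteratedDeriv i W 0
      = iteratedDeriv (i + 2) F0 0 - iteratedDeriv (i + 2) F0' 0 := by
    intro i
    rw [hW, iteratedDeriv_sub' cddF0 cddF0', hddF0eq i, hddF0eq' i]
  have hWzero : ∀ i < k, iteratedDeriv i W 0 = 0 := by
    intro i hi
    rw [hWi i, MF0 (i + 2) (by omega), sub_self]
  have hextract : iteratedDeriv k T3a 0
      = (F1 0 * F1 0) * (iteratedDeriv (k + 2) F0 0 - iteratedDeriv (k + 2) F0' 0) := by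
    have := extract k (fun x => F1 x * F1 x) W (cF1.mul cF1) cW hWzero
    rw [hT3a]
    rw [show (fun x => F1 x * F1 x * W x) = fun x => (fun y => F1 y * F1 y) x * W x from rfl]
    rw [this, hWi k]
  -- conclude
  have hF1pos : 0 < F1 0 := lt_of_lt_of_le hδ (hp (0, p) (hline p hpI 0))
  have hkey : (F1 0 * F1 0) * (iteratedDeriv (k + 2) F0 0 - iteratedDeriv (k + 2) F0' 0) = 0 := by
    rw [← hextract]
    linarith [hsplit, hsplit', mT1, mT2, mT4, mT3b]
  have hne : F1 0 * F1 0 ≠ 0 := by positivity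
  have := mul_eq_zero.mp hkey
  rcases this with hc | hc
  · exact absurd hc hne
  · linarith [hc]

end HFR

namespace HFR

lemma analyticAt_of_bound {g : ℝ → ℝ} (hg : ContDiff ℝ ∞ g) {L K : ℝ} (hL : 0 < L) (hK : 0 ≤ K)
    (hb : ∀ m : ℕ, 2 ≤ m → ∀ y, |iteratedDeriv m g y| ≤ K * L ^ m * (Nat.factorial m : ℝ))
    (x : ℝ) : AnalyticAt ℝ g x := by
  set a : ℕ → ℝ := fun n => iteratedDeriv n g x / (Nat.factorial n : ℝ) with ha
  set ρ : ℝ := 1 / (2 * L) with hρ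
  have hρpos : 0 < ρ := by positivity
  have hLρ : L * ρ = 1 / 2 := by rw [hρ]; field_simp
  set M : ℝ := |g x| + |iteratedDeriv 1 g x| / L + K with hM
  have hg1 : 0 ≤ |iteratedDeriv 1 g x| / L := by positivity
  have hMnn : 0 ≤ M := by have := abs_nonneg (g x); linarith
  have hcoef : ∀ n : ℕ, ∀ t : ℝ, 0 ≤ t → t ≤ ρ → |a n| * t ^ n ≤ M * (1 / 2) ^ n := by
    intro n t ht0 htρ
    have hLt : L * t ≤ 1 / 2 := by
      rw [← hLρ]; exact mul_le_mul_of_nonneg_left htρ hL.le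
    match n with
    | 0 =>
        show |iteratedDeriv 0 g x / (Nat.factorial 0 : ℝ)| * t ^ 0 ≤ M * (1 / 2) ^ 0
        simp only [iteratedDeriv_zero, Nat.factorial_zero, Nat.cast_one, div_one, pow_zero,
          mul_one]
        linarith
    | 1 =>
        show |iteratedDeriv 1 g x / (Nat.factorial 1 : ℝ)| * t ^ 1 ≤ M * (1 / 2) ^ 1
        simp only [Nat.factorial_one, Nat.cast_one, div_one, pow_one]
        have h1 : |iteratedDeriv 1 g x| * t ≤ |iteratedDeriv 1 g x| * ρ :=
          mul_le_mul_of_nonneg_left htρ (abs_nonneg _)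
        have h2 : |iteratedDeriv 1 g x| * ρ = |iteratedDeriv 1 g x| / L * (1 / 2) := by
          rw [hρ]; field_simp
        have := abs_nonneg (g x)
        nlinarith
    | n + 2 =>
        have hf : (0:ℝ) < (Nat.factorial (n + 2) : ℝ) := by positivity
        have e1 : |a (n + 2)| ≤ K * L ^ (n + 2) := by
          show |iteratedDeriv (n + 2) g x / (Nat.factorial (n + 2) : ℝ)| ≤ _
          rw [abs_div, Nat.abs_cast, div_le_iff₀ hf]
          exact hb (n + 2) (by omega) x
        have e2 : (L * t) ^ (n + 2) ≤ (1 / 2) ^ (n + 2) := pow_le_pow_left₀ (by positivity) hLt _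
        have e3 : K ≤ M := by have := abs_nonneg (g x); linarith
        calc |a (n + 2)| * t ^ (n + 2) ≤ K * L ^ (n + 2) * t ^ (n + 2) :=
              mul_le_mul_of_nonneg_right e1 (by positivity)
          _ = K * (L * t) ^ (n + 2) := by ring
          _ ≤ K * (1 / 2) ^ (n + 2) := mul_le_mul_of_nonneg_left e2 hK
          _ ≤ M * (1 / 2) ^ (n + 2) := mul_le_mul_of_nonneg_right e3 (by positivity)
  set p := FormalMultilinearSeries.ofScalars ℝ a with hp
  have hpn : ∀ n (y : ℝ), p n (fun _ => y) = a n * y ^ n := by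
    intro n y
    rw [hp, FormalMultilinearSeries.ofScalars_apply_eq, smul_eq_mul]
  have hgn : ∀ k : ℕ, ContDiff ℝ k g := fun k => hg.of_le (by exact_mod_cast le_top)
  refine ⟨p, ENNReal.ofReal ρ, ?_, ?_, ?_⟩
  · refine FormalMultilinearSeries.le_radius_of_bound p M (r := ρ.toNNReal) (fun n => ?_)
    rw [hp, FormalMultilinearSeries.ofScalars_norm, Real.coe_toNNReal _ hρpos.le,
      Real.norm_eq_abs]
    have : (1 / 2 : ℝ) ^ n ≤ 1 := pow_le_one₀ (by norm_num) (by norm_num)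
    exact (hcoef n ρ hρpos.le le_rfl).trans (mul_le_of_le_one_right hMnn this)
  · exact ENNReal.ofReal_pos.2 hρpos
  · intro y hy
    have hy' : |y| < ρ := by
      rw [Metric.mem_eball, edist_dist, ENNReal.ofReal_lt_ofReal_iff hρpos, Real.dist_eq,
        sub_zero] at hy
      exact hy
    have hfun : (fun n : ℕ => p n fun _ => y) = fun n => a n * y ^ n := funext fun n => hpn n y
    rw [hfun]
    have hs : Summable fun n => ‖a n * y ^ n‖ :=
      Summable.of_nonneg_of_le (fun n => norm_nonneg _)
        (fun n => by
          rw [Real.norm_eq_abs, abs_mul, abs_pow]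
          exact hcoef n |y| (abs_nonneg y) hy'.le)
        (summable_geometric_two.mul_left M)
    rw [hasSum_iff_tendsto_nat_of_summable_norm hs, ← Filter.tendsto_add_atTop_iff_nat 1]
    by_cases hy0 : y = 0
    · subst hy0
      have e : ∀ n : ℕ, ∑ i ∈ Finset.range (n + 1), a i * (0:ℝ) ^ i = g x := by
        intro n
        rw [Finset.sum_range_succ']
        simp [ha]
      simp only [e, add_zero]
      exact tendsto_const_nhds
    · have hne : x ≠ x + y := by intro h; apply hy0; linarith
      have hLy : L * |y| ≤ 1 / 2 := by
        rw [← hLρ]; exact mul_le_mul_of_nonneg_left hy'.le hL.le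
      have ht : Filter.Tendsto (fun n : ℕ => K * (1 / 2 : ℝ) ^ (n + 1)) Filter.atTop (𝓝 0) := by
        have := ((tendsto_pow_atTop_nhds_zero_of_lt_one (r := (1 / 2 : ℝ)) (by norm_num)
          (by norm_num)).comp (Filter.tendsto_add_atTop_nat 1)).const_mul K
        rw [mul_zero] at this
        exact this
      rw [← tendsto_sub_nhds_zero_iff]
      refine squeeze_zero_norm' ?_ ht
      rw [Filter.eventually_atTop]
      refine ⟨1, fun n hn => ?_⟩
      obtain ⟨x', hx', hrem⟩ := taylor_mean_remainder_lagrange (f := g) (x := x + y) (x₀ := x)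
        (n := n) hne (hgn n).contDiffOn
        (((hgn (n + 1)).contDiffOn.differentiableOn_iteratedDerivWithin
          (by exact_mod_cast Nat.lt_succ_self n) (uniqueDiffOn_uIcc hne)).mono
          Set.Ioo_subset_Icc_self)
      have hS : ∑ i ∈ Finset.range (n + 1), a i * y ^ i
          = taylorWithinEval g n (Set.uIcc x (x + y)) x (x + y) := by
        rw [taylor_within_apply]
        refine Finset.sum_congr rfl (fun k _ => ?_)
        rw [iteratedDerivWithin_eq_iteratedDeriv (uniqueDiffOn_uIcc hne) (hgn k).contDiffAt
          Set.left_mem_uIcc, smul_eq_mul, ha]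
        rw [add_sub_cancel_left]
        ring
      rw [iteratedDerivWithin_eq_iteratedDeriv (uniqueDiffOn_uIcc hne) (hgn (n + 1)).contDiffAt
          (Set.Ioo_subset_Icc_self hx'), add_sub_cancel_left] at hrem
      rw [hS, Real.norm_eq_abs, abs_sub_comm, hrem]
      have hD := hb (n + 1) (by omega) x'
      have hfpos : (0:ℝ) < (Nat.factorial (n + 1) : ℝ) := by positivity
      rw [abs_div, abs_mul, abs_pow, Nat.abs_cast, div_le_iff₀ hfpos]
      calc |iteratedDeriv (n + 1) g x'| * |y| ^ (n + 1)
          ≤ (K * L ^ (n + 1) * (Nat.factorial (n + 1) : ℝ)) * |y| ^ (n + 1) :=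
            mul_le_mul_of_nonneg_right hD (by positivity)
        _ = K * (L * |y|) ^ (n + 1) * (Nat.factorial (n + 1) : ℝ) := by ring
        _ ≤ K * (1 / 2) ^ (n + 1) * (Nat.factorial (n + 1) : ℝ) :=
            mul_le_mul_of_nonneg_right
              (mul_le_mul_of_nonneg_left (pow_le_pow_left₀ (by positivity) hLy _) hK) hfpos.le

end HFR

/-- Main recovery theorem (height-function formulation): an even solution of the height
equation with the uniform analyticity estimates `‖∂_q^m h‖ ≤ L^(m-1) (m-2)!` (`m ≥ 2`)
and `∂_p h ≥ δ > 0` is uniquely determined on the whole strip by its on-axis trace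
`p ↦ h(0,p)`. -/
theorem height_function_recovery
    (p₀ L δ : ℝ) (hp₀ : p₀ < 0) (hL : 0 < L) (hδ : 0 < δ)
    (γ : ℝ → ℝ) (hγ : ContDiffOn ℝ (⊤ : ℕ∞) γ (Set.Ioo p₀ 0))
    (h h' : ℝ × ℝ → ℝ)
    (hh : ContDiffOn ℝ (⊤ : ℕ∞) h (Set.univ ×ˢ Set.Ioo p₀ 0))
    (hh' : ContDiffOn ℝ (⊤ : ℕ∞) h' (Set.univ ×ˢ Set.Ioo p₀ 0))
    (heq : ∀ z ∈ (Set.univ ×ˢ Set.Ioo p₀ 0 : Set (ℝ × ℝ)),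
        (1 + (pdq h z)^2) * pdp (pdp h) z
          - 2 * pdp h z * pdq h z * pdq (pdp h) z
          + (pdp h z)^2 * pdq (pdq h) z
          - γ z.2 * (pdp h z)^3 = 0)
    (heq' : ∀ z ∈ (Set.univ ×ˢ Set.Ioo p₀ 0 : Set (ℝ × ℝ)),
        (1 + (pdq h' z)^2) * pdp (pdp h') z
          - 2 * pdp h' z * pdq h' z * pdq (pdp h') z
          + (pdp h' z)^2 * pdq (pdq h') z
          - γ z.2 * (pdp h' z)^3 = 0)
    (heven : ∀ q : ℝ, ∀ p ∈ Set.Ioo p₀ 0, h (-q, p) = h (q, p))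
    (heven' : ∀ q : ℝ, ∀ p ∈ Set.Ioo p₀ 0, h' (-q, p) = h' (q, p))
    (hbound : ∀ m : ℕ, 2 ≤ m → ∀ q : ℝ, ∀ p ∈ Set.Ioo p₀ 0,
        |iteratedDeriv m (fun q' => h (q', p)) q| ≤ L ^ (m - 1) * (Nat.factorial (m - 2)))
    (hbound' : ∀ m : ℕ, 2 ≤ m → ∀ q : ℝ, ∀ p ∈ Set.Ioo p₀ 0,
        |iteratedDeriv m (fun q' => h' (q', p)) q| ≤ L ^ (m - 1) * (Nat.factorial (m - 2)))
    (hp : ∀ z ∈ (Set.univ ×ˢ Set.Ioo p₀ 0 : Set (ℝ × ℝ)), δ ≤ pdp h z)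
    (hp' : ∀ z ∈ (Set.univ ×ˢ Set.Ioo p₀ 0 : Set (ℝ × ℝ)), δ ≤ pdp h' z)
    (htrace : ∀ p ∈ Set.Ioo p₀ 0, h (0, p) = h' (0, p)) :
    ∀ q : ℝ, ∀ p ∈ Set.Ioo p₀ 0, h (q, p) = h' (q, p) := by
  intro q p hpI
  have hSopen : IsOpen (Set.univ ×ˢ Set.Ioo p₀ 0 : Set (ℝ × ℝ)) :=
    isOpen_univ.prod isOpen_Ioo
  have hhs : ContDiffOn ℝ ∞ h (Set.univ ×ˢ Set.Ioo p₀ 0) := hh.of_le (by simp)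
  have hhs' : ContDiffOn ℝ ∞ h' (Set.univ ×ˢ Set.Ioo p₀ 0) := hh'.of_le (by simp)
  -- all iterated `q`-derivatives agree on the axis of symmetry
  have main : ∀ n : ℕ, ∀ p' ∈ Set.Ioo p₀ 0, ∀ i ≤ n,
      iteratedDeriv i (fun q' => h (q', p')) 0 = iteratedDeriv i (fun q' => h' (q', p')) 0 := by
    intro n
    induction n with
    | zero =>
        intro p' hp'2 i hi
        interval_cases i
        simp only [iteratedDeriv_zero]
        exact htrace p' hp'2
    | succ n IHn =>
        intro p' hp'2 i hi
        by_cases hin : i ≤ n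
        · exact IHn p' hp'2 i hin
        · have hieq : i = n + 1 := by omega
          subst hieq
          cases n with
          | zero =>
              have o : Odd (0 + 1) := ⟨0, by ring⟩
              rw [HFR.iteratedDeriv_odd_even_fn (fun x => heven x p' hp'2) o,
                HFR.iteratedDeriv_odd_even_fn (fun x => heven' x p' hp'2) o]
          | succ k =>
              exact HFR.even_step p₀ γ h h' δ hδ hhs hhs' heq heq' hp k IHn hp'2
  -- the difference along the horizontal line through `p` vanishes identically
  have hlinemem : ∀ x : ℝ, ((x, p) ∈ (Set.univ ×ˢ Set.Ioo p₀ 0 : Set (ℝ × ℝ))) :=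
    fun x => ⟨Set.mem_univ _, hpI⟩
  have cF0 : ContDiff ℝ ∞ (fun x : ℝ => h (x, p)) := HFR.contDiff_line hSopen hhs hlinemem
  have cF0' : ContDiff ℝ ∞ (fun x : ℝ => h' (x, p)) := HFR.contDiff_line hSopen hhs' hlinemem
  have cg : ContDiff ℝ ∞ (fun x : ℝ => h (x, p) - h' (x, p)) := cF0.sub cF0'
  have hz : ∀ n : ℕ, iteratedDeriv n (fun x : ℝ => h (x, p) - h' (x, p)) 0 = 0 := by
    intro n
    rw [HFR.iteratedDeriv_sub' cF0 cF0' n 0, main n p hpI n le_rfl, sub_self]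
  have ha : ∀ x : ℝ, AnalyticAt ℝ (fun x : ℝ => h (x, p) - h' (x, p)) x := by
    intro x
    have hbd : ∀ m : ℕ, 2 ≤ m → ∀ y,
        |iteratedDeriv m (fun x : ℝ => h (x, p) - h' (x, p)) y|
          ≤ 2 / L * L ^ m * (Nat.factorial m : ℝ) := by
      intro m hm y
      rw [HFR.iteratedDeriv_sub' cF0 cF0' m y]
      have e1 := hbound m hm y p hpI
      have e2 := hbound' m hm y p hpI
      have hf : ((m - 2).factorial : ℝ) ≤ (m.factorial : ℝ) := by
        exact_mod_cast Nat.factorial_le (Nat.sub_le m 2)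
      have hpow : L ^ m = L * L ^ (m - 1) := by
        rw [← pow_succ']; congr 1; omega
      have hLpos : 0 < L ^ (m - 1) := pow_pos hL _
      have e3 : 2 / L * (L * L ^ (m - 1)) * (m.factorial : ℝ) = 2 * (L ^ (m - 1) * m.factorial) := by
        field_simp
      rw [hpow, e3]
      nlinarith [abs_sub (iteratedDeriv m (fun q' => h (q', p)) y)
        (iteratedDeriv m (fun q' => h' (q', p)) y), mul_le_mul_of_nonneg_left hf hLpos.le]
    exact HFR.analyticAt_of_bound cg hL (by positivity) hbd x
  have hzero := HFR.zero_of_derivs_zero_at_origin cg ha hz q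
  have : h (q, p) - h' (q, p) = 0 := hzero
  linarith
end

section
/- Let p₀<0 and γ:(p₀,0)→ℝ be continuous. For a sequence (a_{2n})_{n≥0} of C² functions on (p₀,0), define for each n≥0 the functions A_{2n}=a_{2n}″+Σ_{k=1}^{n} a_{2(n−k)}″·(Σ_{l=1}^{k} 4l(k−l+1)·a_{2l}·a_{2(k−l+1)}), B_{2n}=−2·Σ_{k=0}^{n−1} a_{2(n−k−1)}′·(Σ_{l=1}^{k+1} 4l(k−l+2)·a_{2l}·a_{2(k−l+2)}′), C_{2n}=Σ_{k=0}^{n} (2k+1)(2k+2)·a_{2k+2}·(Σ_{l=0}^{n−k} a_{2l}′·a_{2(n−k−l)}′), and D_{2n}=−γ·Σ_{k=0}^{n} a_{2k}′·(Σ_{l=0}^{n−k} a_{2l}′·a_{2(n−k−l)}′) (with empty sums equal to 0, so B₀=0). Suppose (a_{2n})_{n≥0} and (b_{2n})_{n≥0} are two such sequences, each satisfying A_{2n}+B_{2n}+C_{2n}+D_{2n}=0 on (p₀,0) for every n≥0 (with the respective sequence), and suppose a₀=b₀ on (p₀,0) with a₀′(p)>0 for all p∈(p₀,0). Then a_{2n}=b_{2n}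 on (p₀,0) for every n≥0. -/
/-- `coeffA γ a n p` is `A_{2n}(p)` for the sequence of coefficient functions
`a n = a_{2n}`. -/
noncomputable def coeffA (a : ℕ → ℝ → ℝ) (n : ℕ) (p : ℝ) : ℝ :=
  deriv (deriv (a n)) p
    + ∑ k ∈ Finset.Icc 1 n, deriv (deriv (a (n - k))) p *
        (∑ l ∈ Finset.Icc 1 k,
          ((4 * l * (k + 1 - l) : ℕ) : ℝ) * a l p * a (k + 1 - l) p)

/-- `coeffB γ a n p` is `B_{2n}(p)`; the empty sum convention gives `B₀ = 0`. -/
noncomputable def coeffB (a : ℕ → ℝ → ℝ) (n : ℕ) (p : ℝ) : ℝ :=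
  -2 * ∑ k ∈ Finset.range n, deriv (a (n - k - 1)) p *
      (∑ l ∈ Finset.Icc 1 (k + 1),
        ((4 * l * (k + 2 - l) : ℕ) : ℝ) * a l p * deriv (a (k + 2 - l)) p)

/-- `coeffC γ a n p` is `C_{2n}(p)`. -/
noncomputable def coeffC (a : ℕ → ℝ → ℝ) (n : ℕ) (p : ℝ) : ℝ :=
  ∑ k ∈ Finset.range (n + 1), (((2 * k + 1) * (2 * k + 2) : ℕ) : ℝ) * a (k + 1) p *
      (∑ l ∈ Finset.range (n - k + 1), deriv (a l) p * deriv (a (n - k - l)) p)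

/-- `coeffD γ a n p` is `D_{2n}(p)`. -/
noncomputable def coeffD (γ : ℝ → ℝ) (a : ℕ → ℝ → ℝ) (n : ℕ) (p : ℝ) : ℝ :=
  -(γ p) * ∑ k ∈ Finset.range (n + 1), deriv (a k) p *
      (∑ l ∈ Finset.range (n - k + 1), deriv (a l) p * deriv (a (n - k - l)) p)

/-- The Taylor coefficient sequence `(a_{2n})` of the height function, determined by the
recursion `A_{2n} + B_{2n} + C_{2n} + D_{2n} = 0`, is uniquely determined by the leading
coefficient `a₀` (when `a₀' > 0`) and the vorticity function `γ`. -/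
theorem coefficient_sequence_unique
    (p₀ : ℝ) (hp₀ : p₀ < 0)
    (γ : ℝ → ℝ) (hγ : ContinuousOn γ (Set.Ioo p₀ 0))
    (a b : ℕ → ℝ → ℝ)
    (ha : ∀ n : ℕ, ContDiffOn ℝ 2 (a n) (Set.Ioo p₀ 0))
    (hb : ∀ n : ℕ, ContDiffOn ℝ 2 (b n) (Set.Ioo p₀ 0))
    (hrela : ∀ n : ℕ, ∀ p ∈ Set.Ioo p₀ 0,
        coeffA a n p + coeffB a n p + coeffC a n p + coeffD γ a n p = 0)
    (hrelb : ∀ n : ℕ, ∀ p ∈ Set.Ioo p₀ 0,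
        coeffA b n p + coeffB b n p + coeffC b n p + coeffD γ b n p = 0)
    (h0 : ∀ p ∈ Set.Ioo p₀ 0, a 0 p = b 0 p)
    (h0' : ∀ p ∈ Set.Ioo p₀ 0, 0 < deriv (a 0) p) :
    ∀ n : ℕ, ∀ p ∈ Set.Ioo p₀ 0, a n p = b n p := by
  intro n
  induction n using Nat.strong_induction_on with
  | _ n IH =>
    cases n with
    | zero => exact h0
    | succ m =>
      intro p hp
      have heq : ∀ k, k ≤ m → ∀ q ∈ Set.Ioo p₀ 0, a k q = b k q :=
        fun k hk q hq => IH k (Nat.lt_succ_of_le hk) q hq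
      have hd : ∀ k, k ≤ m → ∀ q ∈ Set.Ioo p₀ 0, deriv (a k) q = deriv (b k) q := by
        intro k hk q hq
        exact Filter.EventuallyEq.deriv_eq
          (Filter.eventuallyEq_of_mem (isOpen_Ioo.mem_nhds hq) (fun r hr => heq k hk r hr))
      have hdd : ∀ k, k ≤ m → ∀ q ∈ Set.Ioo p₀ 0,
          deriv (deriv (a k)) q = deriv (deriv (b k)) q := by
        intro k hk q hq
        exact Filter.EventuallyEq.deriv_eq
          (Filter.eventuallyEq_of_mem (isOpen_Ioo.mem_nhds hq) (fun r hr => hd k hk r hr))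
      have hA : coeffA a m p = coeffA b m p := by
        unfold coeffA
        rw [hdd m le_rfl p hp]
        congr 1
        refine Finset.sum_congr rfl fun k hk => ?_
        simp only [Finset.mem_Icc] at hk
        rw [hdd (m - k) (by omega) p hp]
        congr 1
        refine Finset.sum_congr rfl fun l hl => ?_
        simp only [Finset.mem_Icc] at hl
        rw [heq l (by omega) p hp, heq (k + 1 - l) (by omega) p hp]
      have hB : coeffB a m p = coeffB b m p := by
        unfold coeffB
        congr 1
        refine Finset.sum_congr rfl fun k hk => ?_
        simp only [Finset.mem_range] at hk
        rw [hd (m - k - 1) (by omega) p hp]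
        congr 1
        refine Finset.sum_congr rfl fun l hl => ?_
        simp only [Finset.mem_Icc] at hl
        rw [heq l (by omega) p hp, hd (k + 2 - l) (by omega) p hp]
      have hD : coeffD γ a m p = coeffD γ b m p := by
        unfold coeffD
        congr 1
        refine Finset.sum_congr rfl fun k hk => ?_
        simp only [Finset.mem_range] at hk
        rw [hd k (by omega) p hp]
        congr 1
        refine Finset.sum_congr rfl fun l hl => ?_
        simp only [Finset.mem_range] at hl
        rw [hd l (by omega) p hp, hd (m - k - l) (by omega) p hp]
      have hC : coeffC a m p - coeffC b m p =
          (((2 * m + 1) * (2 * m + 2) : ℕ) : ℝ) * (deriv (a 0) p * deriv (a 0) p) *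
            (a (m + 1) p - b (m + 1) p) := by
        have peel : ∀ c : ℕ → ℝ → ℝ, coeffC c m p =
            (∑ k ∈ Finset.range m, (((2 * k + 1) * (2 * k + 2) : ℕ) : ℝ) * c (k + 1) p *
              (∑ l ∈ Finset.range (m - k + 1), deriv (c l) p * deriv (c (m - k - l)) p))
            + (((2 * m + 1) * (2 * m + 2) : ℕ) : ℝ) * c (m + 1) p *
                (deriv (c 0) p * deriv (c 0) p) := by
          intro c
          unfold coeffC
          rw [Finset.sum_range_succ]
          congr 1
          rw [Nat.sub_self]
          simp [Finset.sum_range_one]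
        have hrest : ∑ k ∈ Finset.range m, (((2 * k + 1) * (2 * k + 2) : ℕ) : ℝ) * a (k + 1) p *
              (∑ l ∈ Finset.range (m - k + 1), deriv (a l) p * deriv (a (m - k - l)) p)
            = ∑ k ∈ Finset.range m, (((2 * k + 1) * (2 * k + 2) : ℕ) : ℝ) * b (k + 1) p *
              (∑ l ∈ Finset.range (m - k + 1), deriv (b l) p * deriv (b (m - k - l)) p) := by
          refine Finset.sum_congr rfl fun k hk => ?_
          simp only [Finset.mem_range] at hk
          rw [heq (k + 1) (by omega) p hp]
          congr 1
          refine Finset.sum_congr rfl fun l hl => ?_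
          simp only [Finset.mem_range] at hl
          rw [hd l (by omega) p hp, hd (m - k - l) (by omega) p hp]
        have hb0 : deriv (b 0) p = deriv (a 0) p := (hd 0 (Nat.zero_le m) p hp).symm
        rw [peel a, peel b, hrest, hb0]
        ring
      have hrel := hrela m p hp
      have hrel' := hrelb m p hp
      have hkey : (((2 * m + 1) * (2 * m + 2) : ℕ) : ℝ) * (deriv (a 0) p * deriv (a 0) p) *
          (a (m + 1) p - b (m + 1) p) = 0 := by
        rw [← hC]
        linarith [hrel, hrel', hA, hB, hD]
      have hpos : (0 : ℝ) < (((2 * m + 1) * (2 * m + 2) : ℕ) : ℝ) *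
          (deriv (a 0) p * deriv (a 0) p) := by
        have h1 := h0' p hp
        have h2 : (0 : ℝ) < (((2 * m + 1) * (2 * m + 2) : ℕ) : ℝ) := by positivity
        positivity
      have := mul_eq_zero.mp hkey
      rcases this with h | h
      · exact absurd h (ne_of_gt hpos)
      · linarith
end
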